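/- arXiv:1611.09398 — 7 statements merged into one kernel-verified Lean document; each statement's English description precedes it below -/
import Mathlib

section
/- Let a : ℕ → ℝ be a sequence with a 0 = 0, and let t be a real number with 0 ≤ t < 1 such that the series ∑_{n≥1} |a n| · tⁿ is summable. Then the double series ∑_{m≥1} (1/m) ∑_{n≥1} (a n) · t^{n·m} is summable, the infinite product ∏_{n≥1} (1 − tⁿ)^(−(a n)) (with real exponents, taken via rpow) is multipliable, and exp( ∑_{m≥1} (1/m) ∑_{n≥1} (a n) · t^{n·m} ) = ∏_{n≥1} (1 − tⁿ)^(−(a n)). -/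
private noncomputable def PEaux (a : ℕ → ℝ) (t : ℝ) : ℕ × ℕ → ℝ :=
  fun p => a (p.1 + 1) * t ^ ((p.1 + 1) * (p.2 + 1)) / (p.2 + 1)

set_option maxHeartbeats 1000000 in
/-- Euler-type product formula for the plethystic exponential:
for `f(t) = ∑_{n≥1} a n · tⁿ` one has
`PE[f](t) = exp(∑_{m≥1} f(t^m)/m) = ∏_{n≥1} (1 - tⁿ)^(-a n)`. -/
theorem plethystic_exponential_product_formula
    (a : ℕ → ℝ) (ha : a 0 = 0) (t : ℝ) (ht0 : 0 ≤ t) (ht1 : t < 1)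
    (hsum : Summable fun n : ℕ => |a n| * t ^ n) :
    Summable (fun m : ℕ =>
      (1 / (m + 1 : ℝ)) * ∑' n : ℕ, a n * t ^ (n * (m + 1))) ∧
    Multipliable (fun n : ℕ => (1 - t ^ (n + 1)) ^ (-(a (n + 1))) : ℕ → ℝ) ∧
    Real.exp (∑' m : ℕ, (1 / (m + 1 : ℝ)) * ∑' n : ℕ, a n * t ^ (n * (m + 1)))
      = ∏' n : ℕ, (1 - t ^ (n + 1)) ^ (-(a (n + 1))) := by
  have hF_def : PEaux a t = fun p => a (p.1 + 1) * t ^ ((p.1 + 1) * (p.2 + 1)) / (p.2 + 1) := rfl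
  have htn : ∀ n : ℕ, t ^ (n + 1) < 1 := fun n => pow_lt_one₀ ht0 ht1 (Nat.succ_ne_zero n)
  have hpos : ∀ n : ℕ, 0 < 1 - t ^ (n + 1) := fun n => sub_pos.2 (htn n)
  have hashift : Summable fun n : ℕ => |a (n + 1)| * t ^ (n + 1) :=
    (summable_nat_add_iff 1).2 hsum
  have hgeo : Summable fun m : ℕ => t ^ m := summable_geometric_of_lt_one ht0 ht1
  -- summability of the double family
  have hbig : Summable (fun p : ℕ × ℕ => (|a (p.1 + 1)| * t ^ (p.1 + 1)) * t ^ p.2) :=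
    Summable.mul_of_nonneg (f := fun n : ℕ => |a (n + 1)| * t ^ (n + 1))
      (g := fun m : ℕ => t ^ m) hashift hgeo (fun n => by positivity) (fun m => by positivity)
  have hF : Summable (PEaux a t) := by
    apply Summable.of_abs
    refine Summable.of_nonneg_of_le (f := fun p : ℕ × ℕ => |a (p.1 + 1)| * t ^ (p.1 + 1) * t ^ p.2) (fun p => abs_nonneg (PEaux a t p)) ?_ hbig
    rintro ⟨n, m⟩
    have h1 : |PEaux a t (n, m)| = |a (n + 1)| * t ^ ((n + 1) * (m + 1)) / (m + 1) := by
      simp only [PEaux, abs_div, abs_mul, abs_pow, abs_of_nonneg ht0]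
      congr 1
      rw [abs_of_nonneg]; positivity
    rw [h1]
    have h2 : t ^ ((n + 1) * (m + 1)) ≤ t ^ (n + 1 + m) := by
      apply pow_le_pow_of_le_one ht0 ht1.le
      nlinarith
    calc |a (n + 1)| * t ^ ((n + 1) * (m + 1)) / (m + 1)
        ≤ |a (n + 1)| * t ^ ((n + 1) * (m + 1)) / 1 := by
          apply div_le_div_of_nonneg_left _ one_pos
          · linarith [Nat.cast_nonneg (α := ℝ) m]
          · positivity
      _ = |a (n + 1)| * t ^ ((n + 1) * (m + 1)) := by ring
      _ ≤ |a (n + 1)| * t ^ (n + 1 + m) := by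
          apply mul_le_mul_of_nonneg_left h2 (abs_nonneg _)
      _ = (|a (n + 1)| * t ^ (n + 1)) * t ^ m := by rw [pow_add]; ring
  -- inner summability for each m
  have hinner : ∀ m : ℕ, Summable fun n : ℕ => a n * t ^ (n * (m + 1)) := by
    intro m
    apply Summable.of_abs
    apply Summable.of_nonneg_of_le (fun n => abs_nonneg _) _ hsum
    intro n
    rw [abs_mul, abs_pow, abs_of_nonneg ht0]
    apply mul_le_mul_of_nonneg_left _ (abs_nonneg _)
    apply pow_le_pow_of_le_one ht0 ht1.le
    nlinarith [Nat.zero_le (n * m)]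
  -- rewriting the inner sum as a fiber of F
  have hmfun : ∀ m : ℕ, (1 / (m + 1 : ℝ)) * ∑' n : ℕ, a n * t ^ (n * (m + 1))
      = ∑' n : ℕ, PEaux a t (n, m) := by
    intro m
    rw [Summable.tsum_eq_zero_add (hinner m)]
    simp only [ha, zero_mul, zero_add]
    rw [← tsum_mul_left]
    congr 1
    ext n
    simp only [PEaux]
    ring
  have houter : Summable fun m : ℕ => ∑' n : ℕ, PEaux a t (n, m) := by
    have := (hF.prod_symm).prod
    exact this.congr fun m => by rfl
  have hsum1 : Summable (fun m : ℕ =>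
      (1 / (m + 1 : ℝ)) * ∑' n : ℕ, a n * t ^ (n * (m + 1))) :=
    houter.congr fun m => (hmfun m).symm
  -- fiberwise sums over m : the log series
  have hlog : ∀ n : ℕ, HasSum (fun m : ℕ => PEaux a t (n, m))
      (a (n + 1) * (-Real.log (1 - t ^ (n + 1)))) := by
    intro n
    have habs : |t ^ (n + 1)| < 1 := by
      rw [abs_of_nonneg (by positivity : (0:ℝ) ≤ t ^ (n + 1))]
      exact htn n
    have := (Real.hasSum_pow_div_log_of_abs_lt_one habs).mul_left (a (n + 1))
    refine this.congr_fun fun m => ?_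
    simp only [hF_def, ← pow_mul]
    ring
  have hlsum : Summable fun n : ℕ => a (n + 1) * (-Real.log (1 - t ^ (n + 1))) :=
    hF.prod.congr fun n => (hlog n).tsum_eq
  -- the log of the product terms
  have hlogp : ∀ n : ℕ, Real.log ((1 - t ^ (n + 1)) ^ (-(a (n + 1))))
      = a (n + 1) * (-Real.log (1 - t ^ (n + 1))) := by
    intro n
    rw [Real.log_rpow (hpos n)]
    ring
  have hlsum' : Summable fun n : ℕ => Real.log ((1 - t ^ (n + 1)) ^ (-(a (n + 1)))) :=
    hlsum.congr fun n => (hlogp n).symm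
  have hProd : HasProd (fun n : ℕ => (1 - t ^ (n + 1)) ^ (-(a (n + 1))))
      (Real.exp (∑' n : ℕ, Real.log ((1 - t ^ (n + 1)) ^ (-(a (n + 1)))))) := by
    have h := hlsum'.hasSum.rexp
    have heq : (Real.exp ∘ fun n : ℕ => Real.log ((1 - t ^ (n + 1)) ^ (-(a (n + 1)))))
        = fun n : ℕ => (1 - t ^ (n + 1)) ^ (-(a (n + 1))) :=
      funext fun n => Real.exp_log (Real.rpow_pos_of_pos (hpos n) _)
    rwa [heq] at h
  refine ⟨hsum1, hProd.multipliable, ?_⟩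
  have hswap : (∑' m : ℕ, ∑' n : ℕ, PEaux a t (n, m)) = ∑' n : ℕ, ∑' m : ℕ, PEaux a t (n, m) := by
    exact Summable.tsum_comm (f := fun n m => PEaux a t (n, m)) (hF.congr fun p => rfl)
  calc Real.exp (∑' m : ℕ, (1 / (m + 1 : ℝ)) * ∑' n : ℕ, a n * t ^ (n * (m + 1)))
      = Real.exp (∑' m : ℕ, ∑' n : ℕ, PEaux a t (n, m)) := by rw [tsum_congr hmfun]
    _ = Real.exp (∑' n : ℕ, ∑' m : ℕ, PEaux a t (n, m)) := by rw [hswap]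
    _ = Real.exp (∑' n : ℕ, a (n + 1) * (-Real.log (1 - t ^ (n + 1)))) := by
        rw [tsum_congr fun n => (hlog n).tsum_eq]
    _ = Real.exp (∑' n : ℕ, Real.log ((1 - t ^ (n + 1)) ^ (-(a (n + 1))))) := by
        rw [tsum_congr hlogp]
    _ = ∏' n : ℕ, (1 - t ^ (n + 1)) ^ (-(a (n + 1))) := hProd.tprod_eq.symm
end

section
/- Let a : ℕ → ℝ be a sequence with a 0 = 0, and let t be a real number with 0 ≤ t < 1 such that the series ∑_{n≥1} |a n| · tⁿ is summable. Define g : [0,1) → ℝ by g(s) = exp( ∑_{m≥1} (1/m) ∑_{n≥1} (a n) · s^{n·m} ). Then ∑_{k≥1} (μ(k)/k) · log( g(t^k) ) = ∑_{n≥1} (a n) · tⁿ, where μ is the Möbius function. -/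
/-- The plethystic exponential `g(s) = exp(∑_{m≥1} (1/m) ∑_{n≥1} a n · s^{n·m})`
of the series `∑_{n≥1} a n · sⁿ`. -/
noncomputable def plethysticExp (a : ℕ → ℝ) (s : ℝ) : ℝ :=
  Real.exp (∑' m : ℕ, (1 / (m + 1 : ℝ)) * ∑' n : ℕ, a n * s ^ (n * (m + 1)))

/-!
Write `f(s) = ∑ a n sⁿ`. Since `log g(tᵏ) = ∑_m f(t^{km}) / m`, the plethystic logarithm is the
double series `∑_{k,m ≥ 1} μ(k) f(t^{km}) / (km)`. It converges absolutely because
`|f(t^{km})| ≤ (∑ |a n| tⁿ) t^{k-1} t^{m-1}`, so it may be summed along the hyperbolas `km = d`,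
where `∑_{k ∣ d} μ(k) = [d = 1]` leaves only `f(t)`.
-/

open ArithmeticFunction ArithmeticFunction.Moebius

theorem sum_divisorsAntidiagonal_moebius (n : ℕ) :
    ∑ x ∈ n.divisorsAntidiagonal, μ x.1 = if n = 1 then 1 else 0 := by
  rw [Nat.sum_divisorsAntidiagonal fun i _ => μ i, ← coe_mul_zeta_apply, moebius_mul_coe_zeta,
    one_apply]

theorem tsum_moebius_smul_tsum_mul {E : Type*} [NormedAddCommGroup E] [CompleteSpace E]
    {F : ℕ → E} (hF : Summable fun p : ℕ+ × ℕ+ => ‖F (p.1 * p.2)‖) :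
    ∑' k : ℕ+, μ k • ∑' m : ℕ+, F (k * m) = F 1 := by
  set G : ℕ+ × ℕ+ → E := fun p => μ p.1 • F (p.1 * p.2)
  have hG : Summable G := hF.of_norm_bounded fun p => (norm_zsmul_le _ _).trans <|
    mul_le_of_le_one_left (norm_nonneg _) <| by
      rw [Int.norm_eq_abs]; exact_mod_cast abs_moebius_le_one
  have hfiber (n : ℕ+) :
      ∑' x : n.val.divisorsAntidiagonal, G (sigmaAntidiagonalEquivProd ⟨n, x⟩) =
        if n = 1 then F 1 else 0 := by
    have hG_eq (x : n.val.divisorsAntidiagonal) :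
        G (sigmaAntidiagonalEquivProd ⟨n, x⟩) = μ x.1.1 • F n := by
      simp only [sigmaAntidiagonalEquivProd, divisorsAntidiagonalFactors, PNat.mk_coe,
        Equiv.coe_fn_mk, (Nat.mem_divisorsAntidiagonal.mp x.2).1, G]
    simp only [hG_eq, tsum_fintype]
    rw [← Finset.sum_smul, Finset.sum_coe_sort _ fun x : ℕ × ℕ => μ x.1,
      sum_divisorsAntidiagonal_moebius]
    obtain rfl | hn := eq_or_ne n 1 <;> simp [*]
  calc ∑' k : ℕ+, μ k • ∑' m : ℕ+, F (k * m)
      = ∑' k : ℕ+, ∑' m : ℕ+, G (k, m) :=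
        tsum_congr fun k => ((hF.prod_factor k).of_norm.tsum_const_smul _).symm
    _ = ∑' p, G p := hG.tsum_prod.symm
    _ = ∑' n : ℕ+, ∑' x : n.val.divisorsAntidiagonal, G (sigmaAntidiagonalEquivProd ⟨n, x⟩) := by
        rw [← sigmaAntidiagonalEquivProd.tsum_eq]
        exact (sigmaAntidiagonalEquivProd.summable_iff.mpr hG).tsum_sigma
    _ = F 1 := by simp only [hfiber, tsum_ite_eq]

theorem tsum_moebius_succ_smul_tsum_mul_succ {E : Type*} [NormedAddCommGroup E] [CompleteSpace E]
    {F : ℕ → E} (hF : Summable fun p : ℕ × ℕ => ‖F ((p.1 + 1) * (p.2 + 1))‖) :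
    ∑' k : ℕ, μ (k + 1) • ∑' m : ℕ, F ((k + 1) * (m + 1)) = F 1 := by
  have hF' : Summable fun p : ℕ+ × ℕ+ => ‖F (p.1 * p.2)‖ :=
    (Equiv.pnatEquivNat.prodCongr Equiv.pnatEquivNat).symm.summable_iff.mp hF
  calc ∑' k : ℕ, μ (k + 1) • ∑' m : ℕ, F ((k + 1) * (m + 1))
      = ∑' k : ℕ, μ (k + 1) • ∑' m : ℕ+, F ((k + 1) * m) :=
        tsum_congr fun k => by rw [tsum_pnat_eq_tsum_succ (f := fun m => F ((k + 1) * m))]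
    _ = ∑' k : ℕ+, μ k • ∑' m : ℕ+, F (k * m) :=
        (tsum_pnat_eq_tsum_succ (f := fun k => μ k • ∑' m : ℕ+, F (k * m))).symm
    _ = F 1 := tsum_moebius_smul_tsum_mul hF'

section
variable {a : ℕ → ℝ} {t : ℝ}

theorem abs_mul_pow_mul_succ_le (ha : a 0 = 0) (ht0 : 0 ≤ t) (ht1 : t ≤ 1) (n k m : ℕ) :
    |a n * t ^ (n * ((k + 1) * (m + 1)))| ≤ |a n| * t ^ n * (t ^ k * t ^ m) := by
  obtain rfl | hn := Nat.eq_zero_or_pos n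
  · simp [ha]
  rw [abs_mul, abs_of_nonneg (pow_nonneg ht0 _), mul_assoc, ← pow_add, ← pow_add]
  have hexp : n + (k + m) ≤ n * ((k + 1) * (m + 1)) := by
    nlinarith [Nat.le_mul_of_pos_left k hn, Nat.le_mul_of_pos_left m hn]
  exact mul_le_mul_of_nonneg_left (pow_le_pow_of_le_one ht0 ht1 hexp) (abs_nonneg _)

theorem summable_abs_tsum_mul_pow_mul_succ (ha : a 0 = 0) (ht0 : 0 ≤ t) (ht1 : t < 1)
    (hsum : Summable fun n => |a n| * t ^ n) :
    Summable fun p : ℕ × ℕ => |∑' n, a n * t ^ (n * ((p.1 + 1) * (p.2 + 1)))| := by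
  have hgeo := summable_geometric_of_lt_one ht0 ht1
  have hbound := (hgeo.mul_of_nonneg hgeo (fun _ => by positivity) fun _ => by positivity).mul_left
    (∑' n, |a n| * t ^ n)
  refine hbound.of_nonneg_of_le (fun _ => abs_nonneg _) fun p => ?_
  obtain ⟨k, m⟩ := p
  have hle := abs_mul_pow_mul_succ_le ha ht0 ht1.le (k := k) (m := m)
  have hterm : Summable fun n => |a n * t ^ (n * ((k + 1) * (m + 1)))| :=
    (hsum.mul_right _).of_nonneg_of_le (fun _ => abs_nonneg _) hle
  calc |∑' n, a n * t ^ (n * ((k + 1) * (m + 1)))|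
      ≤ ∑' n, |a n * t ^ (n * ((k + 1) * (m + 1)))| :=
        norm_tsum_le_tsum_norm (f := fun n => a n * t ^ (n * ((k + 1) * (m + 1)))) hterm
    _ ≤ ∑' n, |a n| * t ^ n * (t ^ k * t ^ m) := hterm.tsum_le_tsum hle (hsum.mul_right _)
    _ = (∑' n, |a n| * t ^ n) * (t ^ k * t ^ m) := tsum_mul_right

end

theorem log_plethysticExp_pow (a : ℕ → ℝ) (t : ℝ) (k : ℕ) :
    Real.log (plethysticExp a (t ^ k)) =
      ∑' m : ℕ, (∑' n, a n * t ^ (n * (k * (m + 1)))) / (m + 1) := by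
  rw [plethysticExp, Real.log_exp]
  refine tsum_congr fun m => ?_
  simp only [← pow_mul, one_div_mul_eq_div, mul_left_comm k]

/-- The plethystic logarithm `∑_{k≥1} (μ(k)/k) · log(g(t^k))` recovers
`f(t) = ∑_{n≥1} a n · tⁿ` from its plethystic exponential `g`. -/
theorem plethystic_logarithm_inverse
    (a : ℕ → ℝ) (ha : a 0 = 0) (t : ℝ) (ht0 : 0 ≤ t) (ht1 : t < 1)
    (hsum : Summable fun n : ℕ => |a n| * t ^ n) :
    ∑' k : ℕ, ((ArithmeticFunction.moebius (k + 1) : ℝ) / (k + 1)) *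
        Real.log (plethysticExp a (t ^ (k + 1)))
      = ∑' n : ℕ, a n * t ^ n := by
  set F : ℕ → ℝ := fun d => (∑' n, a n * t ^ (n * d)) / d
  have hF : Summable fun p : ℕ × ℕ => ‖F ((p.1 + 1) * (p.2 + 1))‖ := by
    refine (summable_abs_tsum_mul_pow_mul_succ ha ht0 ht1 hsum).of_nonneg_of_le
      (fun _ => norm_nonneg _) fun p => ?_
    rw [Real.norm_eq_abs, abs_div, Nat.abs_cast]
    exact div_le_self (abs_nonneg _) (by norm_cast; exact Nat.mul_pos p.1.succ_pos p.2.succ_pos)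
  have hterm (k : ℕ) : (μ (k + 1) : ℝ) / (k + 1) * Real.log (plethysticExp a (t ^ (k + 1))) =
      μ (k + 1) • ∑' m, F ((k + 1) * (m + 1)) := by
    rw [log_plethysticExp_pow, zsmul_eq_mul, ← tsum_mul_left, ← tsum_mul_left]
    refine tsum_congr fun m => ?_
    simp only [F]
    push_cast
    field_simp
  rw [tsum_congr hterm, tsum_moebius_succ_smul_tsum_mul_succ hF]
  simp [F]
end

section
/- Let E, V, F be finite types, let ν₁, ν₂ : E → V and φ₁, φ₂ : E → F be functions, and let R : E → ℝ. Suppose that (1) for every v ∈ V, ∑_{e : ν₁(e) = v} R(e) + ∑_{e : ν₂(e) = v} R(e) = 2, and (2) for every f ∈ F, ∑_{e : φ₁(e) = f} (1 − R(e)) + ∑_{e : φ₂(e) = f} (1 − R(e)) = 2. Then card(V) + card(F) = card(E). -/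
open Finset

/-- An R-charge assignment on a bipartite graph (edges with two endpoint maps `ν₁, ν₂`
to nodes and two bounding-face maps `φ₁, φ₂`) satisfying the node condition
(R-charges around each node sum to 2) and the face condition ((1 - R) around each
face sums to 2) forces the Euler relation of the torus:
`card V - card E + card F = 0`. -/
theorem rcharge_forces_torus_euler_relation
    (E V F : Type*) [Fintype E] [Fintype V] [Fintype F]
    [DecidableEq V] [DecidableEq F]
    (ν₁ ν₂ : E → V) (φ₁ φ₂ : E → F) (R : E → ℝ)
    (hnode : ∀ v : V,
      (∑ e ∈ univ.filter fun e => ν₁ e = v, R e) +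
      (∑ e ∈ univ.filter fun e => ν₂ e = v, R e) = 2)
    (hface : ∀ f : F,
      (∑ e ∈ univ.filter fun e => φ₁ e = f, (1 - R e)) +
      (∑ e ∈ univ.filter fun e => φ₂ e = f, (1 - R e)) = 2) :
    Fintype.card V + Fintype.card F = Fintype.card E := by
  have hV : (2 : ℝ) * Fintype.card V = 2 * ∑ e, R e := by
    have := Finset.sum_congr rfl (fun v (_ : v ∈ univ) => hnode v)
    rw [Finset.sum_add_distrib, Finset.sum_fiberwise univ ν₁ R,
      Finset.sum_fiberwise univ ν₂ R] at this
    simp only [Finset.sum_const, Finset.card_univ, nsmul_eq_mul] at this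
    linarith
  have hF : (2 : ℝ) * Fintype.card F = 2 * ∑ e, (1 - R e) := by
    have := Finset.sum_congr rfl (fun f (_ : f ∈ univ) => hface f)
    rw [Finset.sum_add_distrib, Finset.sum_fiberwise univ φ₁ (fun e => 1 - R e),
      Finset.sum_fiberwise univ φ₂ (fun e => 1 - R e)] at this
    simp only [Finset.sum_const, Finset.card_univ, nsmul_eq_mul] at this
    linarith
  have hE : ∑ e, (1 - R e) = (Fintype.card E : ℝ) - ∑ e, R e := by
    rw [Finset.sum_sub_distrib]; simp
  have : ((Fintype.card V + Fintype.card F : ℕ) : ℝ) = (Fintype.card E : ℝ) := by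
    push_cast; nlinarith [hV, hF, hE]
  exact_mod_cast this
end

section
/- Let R : Fin 4 → ℝ satisfy R i ≥ 0 for every i and R 0 + R 1 + R 2 + R 3 = 2. Then ∑_{i} (R i − 1)³ ≤ −1/2, with equality if and only if R i = 1/2 for every i. -/
set_option maxHeartbeats 1000000


/-- a-maximization for the quiver phase 𝔽₀(I): on the simplex
`R i ≥ 0`, `∑ R i = 2` in ℝ⁴, the trial a-function `∑ (R i - 1)³` is at most
`-1/2`, with equality iff all `R i = 1/2`. -/
theorem a_maximization_F0 (R : Fin 4 → ℝ)
    (hR : ∀ i, R i ≥ 0) (hsum : R 0 + R 1 + R 2 + R 3 = 2) :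
    (∑ i, (R i - 1) ^ 3) ≤ -1 / 2 ∧
    ((∑ i, (R i - 1) ^ 3) = -1 / 2 ↔ ∀ i, R i = 1 / 2) := by
  have h0 := hR 0
  have h1 := hR 1
  have h2 := hR 2
  have h3 := hR 3
  rw [Fin.sum_univ_four]
  have ga : (R 0 - 1/2)^2 * (2 - R 0) ≥ 0 :=
    mul_nonneg (sq_nonneg _) (by linarith)
  have gb : (R 1 - 1/2)^2 * (2 - R 1) ≥ 0 :=
    mul_nonneg (sq_nonneg _) (by linarith)
  have gc : (R 2 - 1/2)^2 * (2 - R 2) ≥ 0 :=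
    mul_nonneg (sq_nonneg _) (by linarith)
  have gd : (R 3 - 1/2)^2 * (2 - R 3) ≥ 0 :=
    mul_nonneg (sq_nonneg _) (by linarith)
  have key : (R 0 - 1)^3 + (R 1 - 1)^3 + (R 2 - 1)^3 + (R 3 - 1)^3 =
      -1/2 - ((R 0 - 1/2)^2 * (2 - R 0) + (R 1 - 1/2)^2 * (2 - R 1) +
        (R 2 - 1/2)^2 * (2 - R 2) + (R 3 - 1/2)^2 * (2 - R 3)) := by
    linear_combination (3/4 : ℝ) * hsum
  constructor
  · linarith [key]
  constructor
  · intro h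
    rw [key] at h
    have ea : (R 0 - 1/2)^2 * (2 - R 0) = 0 := by linarith
    have eb : (R 1 - 1/2)^2 * (2 - R 1) = 0 := by linarith
    have ec : (R 2 - 1/2)^2 * (2 - R 2) = 0 := by linarith
    have ed : (R 3 - 1/2)^2 * (2 - R 3) = 0 := by linarith
    have alt : ∀ x : ℝ, (x - 1/2)^2 * (2 - x) = 0 → x = 1/2 ∨ x = 2 := by
      intro x hx
      rcases mul_eq_zero.1 hx with hx | hx
      · left
        have := pow_eq_zero_iff (n := 2) (by norm_num) |>.1 hx
        linarith
      · right; linarith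
    have ha' := alt _ ea
    have hb' := alt _ eb
    have hc' := alt _ ec
    have hd' := alt _ ed
    have hA : R 0 = 1/2 := by
      rcases ha' with ha | ha
      · exact ha
      · exfalso; rcases hb' with hb | hb <;> linarith
    have hB : R 1 = 1/2 := by
      rcases hb' with hb | hb
      · exact hb
      · exfalso; rcases ha' with ha | ha <;> linarith
    have hC : R 2 = 1/2 := by
      rcases hc' with hc | hc
      · exact hc
      · exfalso; rcases ha' with ha | ha <;> linarith
    have hD : R 3 = 1/2 := by
      rcases hd' with hd | hd
      · exact hd
      · exfalso; rcases ha' with ha | ha <;> linarith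
    have hall : R 0 = 1/2 ∧ R 1 = 1/2 ∧ R 2 = 1/2 ∧ R 3 = 1/2 :=
      ⟨hA, hB, hC, hD⟩
    intro i
    fin_cases i
    · exact hall.1
    · exact hall.2.1
    · exact hall.2.2.1
    · exact hall.2.2.2
  · intro h
    rw [h 0, h 1, h 2, h 3]
    norm_num
end

section
/- The following two subsets of the space of arrays T : Fin 3 → Fin 3 → Fin 3 → ℂ are equal: (i) the set of T for which there exist x, y, z : Fin 3 → ℂ with crossProduct x y = 0, crossProduct y z = 0, crossProduct z x = 0, and T α β γ = x α · y β · z γ for all α, β, γ; (ii) the set of T for which there exist t ∈ ℂ and v : Fin 3 → ℂ with T α β γ = t · v α · v β · v γ for all α, β, γ. -/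
open Matrix

private lemma cross_zero_sym {x y : Fin 3 → ℂ} (h : crossProduct x y = 0) :
    ∀ i j, x i * y j = x j * y i := by
  rw [cross_apply] at h
  have h0 := congrFun h 0
  have h1 := congrFun h 1
  have h2 := congrFun h 2
  simp [Matrix.cons_val_zero, Matrix.cons_val_one, sub_eq_zero] at h0 h1 h2
  intro i j
  fin_cases i <;> fin_cases j <;> simp_all

private lemma cross_zero_prop {x y : Fin 3 → ℂ} (hx : x ≠ 0)
    (h : ∀ i j, x i * y j = x j * y i) : ∃ a : ℂ, ∀ j, y j = a * x j := by
  obtain ⟨i, hi⟩ := Function.ne_iff.mp hx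
  simp only [Pi.zero_apply] at hi
  refine ⟨y i / x i, fun j => ?_⟩
  have := h i j
  field_simp
  linear_combination this

/-- The vacuum moduli space of the ℂ³/ℤ₃ quiver: the set of arrays
`T α β γ = x α · y β · z γ` with pairwise vanishing cross products of `x, y, z`
equals the cone over the cubic Veronese, i.e. the totally symmetric rank-one
arrays `t · v ⊗ v ⊗ v`. -/
theorem vms_C3_Z3_is_veronese_cone :
    {T : Fin 3 → Fin 3 → Fin 3 → ℂ |
      ∃ x y z : Fin 3 → ℂ,
        crossProduct x y = 0 ∧ crossProduct y z = 0 ∧ crossProduct z x = 0 ∧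
        ∀ α β γ, T α β γ = x α * y β * z γ} =
    {T : Fin 3 → Fin 3 → Fin 3 → ℂ |
      ∃ (t : ℂ) (v : Fin 3 → ℂ), ∀ α β γ, T α β γ = t * v α * v β * v γ} := by
  ext T
  simp only [Set.mem_setOf_eq]
  constructor
  · rintro ⟨x, y, z, hxy, hyz, hzx, hT⟩
    by_cases hx : x = 0
    · exact ⟨0, 0, fun α β γ => by simp [hT, hx]⟩
    by_cases hy : y = 0
    · exact ⟨0, 0, fun α β γ => by simp [hT, hy]⟩
    obtain ⟨a, ha⟩ := cross_zero_prop hx (cross_zero_sym hxy)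
    obtain ⟨b, hb⟩ := cross_zero_prop (y := z) hx fun i j => by linear_combination cross_zero_sym hzx j i
    exact ⟨a * b, x, fun α β γ => by rw [hT, ha, hb]; ring⟩
  · rintro ⟨t, v, hT⟩
    refine ⟨fun i => t * v i, v, v, ?_, cross_self v, ?_, fun α β γ => by rw [hT]⟩
    · show crossProduct (t • v) v = 0
      rw [_root_.map_smul, LinearMap.smul_apply, cross_self, smul_zero]
    · show crossProduct v (t • v) = 0
      rw [LinearMap.map_smul, cross_self, smul_zero]
end

section
/- Consider points (x, y) ∈ ℂ × ℂ on the elliptic curve y² = x³ − x with x·(1 − x²) ≠ 0, and the map β(x, y) = i·(i + x)⁴ / (8·x·(1 − x²)). Then {(x, y) : y² = x³ − x ∧ x·(1 − x²) ≠ 0 ∧ β(x, y) = 0} = {(−i, 1 + i), (−i, −1 − i)}. -/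
open Complex

/-- For the Belyi pair `(y² = x³ - x, β = i(i + x)⁴/(8x(1 - x²)))` of the quiver
phase 𝔽₀(I), the fiber of `β` over 0 consists of the two points `(-i, ±(1 + i))`. -/
theorem belyi_fiber_over_zero_F0I :
    {p : ℂ × ℂ | p.2 ^ 2 = p.1 ^ 3 - p.1 ∧ p.1 * (1 - p.1 ^ 2) ≠ 0 ∧
        I * (I + p.1) ^ 4 / (8 * p.1 * (1 - p.1 ^ 2)) = 0} =
      {(-I, 1 + I), (-I, -1 - I)} := by
  ext ⟨x, y⟩
  simp only [Set.mem_setOf_eq, Set.mem_insert_iff, Set.mem_singleton_iff, Prod.mk.injEq]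
  constructor
  · rintro ⟨hcurve, hne, hβ⟩
    rw [div_eq_zero_iff] at hβ
    have h8 : (8 : ℂ) * x * (1 - x ^ 2) ≠ 0 := by
      intro h
      apply hne
      have h' : x * (1 - x ^ 2) = 0 ∨ (8:ℂ) = 0 := by
        rcases mul_eq_zero.mp h with h | h
        · rcases mul_eq_zero.mp h with h | h
          · exact Or.inr h
          · exact Or.inl (by rw [h]; ring)
        · exact Or.inl (by rw [h]; ring)
      rcases h' with h' | h'
      · exact h'
      · norm_num at h'
    rcases hβ with hβ | hβ
    · have hx : x = -I := by
        rcases mul_eq_zero.mp hβ with h | h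
        · exact absurd h I_ne_zero
        · have : I + x = 0 := pow_eq_zero_iff (by norm_num) |>.mp h
          linear_combination this
      subst hx
      have hy : y ^ 2 = (1 + I) ^ 2 := by
        linear_combination hcurve - (1 + I) * I_sq
      rcases sq_eq_sq_iff_eq_or_eq_neg.mp hy with h | h
      · exact Or.inl ⟨rfl, h⟩
      · exact Or.inr ⟨rfl, by rw [h]; ring⟩
    · exact absurd hβ h8
  · rintro (⟨hx, hy⟩ | ⟨hx, hy⟩) <;> subst hx <;> subst hy <;>
      refine ⟨by linear_combination (1 + I) * I_sq, ?_, ?_⟩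
    · intro h
      have : (-2 : ℂ) * I = 0 := by linear_combination h - I * I_sq
      simp [I_ne_zero] at this
    · rw [div_eq_zero_iff]
      left
      ring_nf
    · intro h
      have : (-2 : ℂ) * I = 0 := by linear_combination h - I * I_sq
      simp [I_ne_zero] at this
    · rw [div_eq_zero_iff]
      left
      ring_nf
end

section
/- Consider points (x, y) ∈ ℂ × ℂ on the elliptic curve y² = x³ − x with x·(1 − x²) ≠ 0, and the map β(x, y) = i·(i + x)⁴ / (8·x·(1 − x²)). Then {(x, y) : y² = x³ − x ∧ x·(1 − x²) ≠ 0 ∧ β(x, y) = 1} = {(i, 1 − i), (i, −1 + i)}. -/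
open Complex

/-- For the Belyi pair `(y² = x³ - x, β = i(i + x)⁴/(8x(1 - x²)))` of the quiver
phase 𝔽₀(I), the fiber of `β` over 1 consists of the two points `(i, ±(1 - i))`. -/
theorem belyi_fiber_over_one_F0I :
    {p : ℂ × ℂ | p.2 ^ 2 = p.1 ^ 3 - p.1 ∧ p.1 * (1 - p.1 ^ 2) ≠ 0 ∧
        I * (I + p.1) ^ 4 / (8 * p.1 * (1 - p.1 ^ 2)) = 1} =
      {(I, 1 - I), (I, -1 + I)} := by
  have hden : I * (1 - I ^ 2) ≠ 0 := by
    have h2 : (1 : ℂ) - I ^ 2 = 2 := by rw [I_sq]; ring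
    rw [h2]
    exact mul_ne_zero I_ne_zero two_ne_zero
  ext ⟨x, y⟩
  simp only [Set.mem_setOf_eq, Set.mem_insert_iff, Set.mem_singleton_iff, Prod.mk.injEq]
  constructor
  · rintro ⟨hcurve, hd, hβ⟩
    have hden8 : (8 : ℂ) * x * (1 - x ^ 2) ≠ 0 := by
      rw [mul_assoc]
      exact mul_ne_zero (by norm_num) hd
    rw [div_eq_one_iff_eq hden8] at hβ
    have hx4 : I * (x - I) ^ 4 = 0 := by
      linear_combination hβ + (-8 * x ^ 3 - 8 * x * I ^ 2 + 8 * x) * I_sq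
    have hx : x = I := by
      have h4 : (x - I) ^ 4 = 0 := by
        rcases mul_eq_zero.mp hx4 with h | h
        · exact absurd h I_ne_zero
        · exact h
      have := pow_eq_zero_iff (n := 4) (by norm_num) |>.mp h4
      exact sub_eq_zero.mp this
    subst hx
    have hy : (y - (1 - I)) * (y + (1 - I)) = 0 := by
      linear_combination hcurve + (I - 1) * I_sq
    rcases mul_eq_zero.mp hy with h | h
    · left; exact ⟨rfl, by linear_combination h⟩
    · right; exact ⟨rfl, by linear_combination h⟩
  · have hd : I * (1 - I ^ 2) ≠ 0 := hden
    have hden8 : (8 : ℂ) * I * (1 - I ^ 2) ≠ 0 := by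
      rw [mul_assoc]
      exact mul_ne_zero (by norm_num) hd
    rintro (⟨hx, hy⟩ | ⟨hx, hy⟩) <;> subst hx <;> subst hy
    · refine ⟨by linear_combination (1 - I) * I_sq, hd, ?_⟩
      rw [div_eq_one_iff_eq hden8]
      linear_combination (16 * I ^ 3 - 8 * I) * I_sq
    · refine ⟨by linear_combination (1 - I) * I_sq, hd, ?_⟩
      rw [div_eq_one_iff_eq hden8]
      linear_combination (16 * I ^ 3 - 8 * I) * I_sq
end
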